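/- arXiv:2203.09097 — 2 statements merged into one kernel-verified Lean document; each statement's English description precedes it below -/
import Mathlib

section
/- Let Ω ⊆ ℝ² be a measurable set and let 1 < α < 2. For all w₁, w₂ ∈ L²(Ω), the functions |w₁|^{2/α} and |w₂|^{2/α} belong to L^α(Ω) and one has ∫_Ω | |w₁(x)|^{2/α} − |w₂(x)|^{2/α} |^α dx ≤ ‖w₁ − w₂‖_{L²(Ω)} · ( ‖w₁‖_{L²(Ω)} + ‖w₂‖_{L²(Ω)} ). -/
/-! For `α ≥ 1` the map `t ↦ t ^ α` is superadditive on `[0, ∞)`, so for `0 ≤ b ≤ a`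
`(a ^ (2/α) - b ^ (2/α)) ^ α ≤ a ^ 2 - b ^ 2 = (a - b) (a + b)`. With `a, b = |w₁ x|, |w₂ x|`
the integrand is bounded by `|w₁ - w₂| (|w₁| + |w₂|)`, and Cauchy–Schwarz followed by the
triangle inequality in `L²` bounds its integral. -/

open MeasureTheory

namespace Real

theorem rpow_sub_le_rpow_sub_rpow {u v p : ℝ} (hv : 0 ≤ v) (hvu : v ≤ u) (hp : 1 ≤ p) :
    (u - v) ^ p ≤ u ^ p - v ^ p := by
  have h := add_rpow_le_rpow_add (sub_nonneg.2 hvu) hv hp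
  rw [sub_add_cancel] at h
  linarith

theorem abs_rpow_sub_rpow_rpow_le {a b p r : ℝ} (ha : 0 ≤ a) (hb : 0 ≤ b) (hp : 1 ≤ p)
    (hr : 0 ≤ r) : |a ^ r - b ^ r| ^ p ≤ |a ^ (r * p) - b ^ (r * p)| := by
  wlog hba : b ≤ a generalizing a b
  · rw [abs_sub_comm, abs_sub_comm (a ^ _)]
    exact this hb ha (le_of_not_ge hba)
  have hmono : b ^ r ≤ a ^ r := rpow_le_rpow hb hba hr
  rw [abs_of_nonneg (sub_nonneg.2 hmono), rpow_mul ha, rpow_mul hb]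
  exact (rpow_sub_le_rpow_sub_rpow (rpow_nonneg hb r) hmono hp).trans (le_abs_self _)

theorem abs_abs_rpow_two_div_sub_rpow_le_mul {x y p : ℝ} (hp : 1 ≤ p) :
    |(|x| ^ (2 / p) - |y| ^ (2 / p))| ^ p ≤ |x - y| * (|x| + |y|) :=
  calc |(|x| ^ (2 / p) - |y| ^ (2 / p))| ^ p ≤ |(|x| ^ (2 : ℝ) - |y| ^ (2 : ℝ))| := by
        simpa [div_mul_cancel₀ _ (by positivity : p ≠ 0)] using
          abs_rpow_sub_rpow_rpow_le (abs_nonneg x) (abs_nonneg y) hp (by positivity : 0 ≤ 2 / p)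
    _ = |(|x| - |y|)| * (|x| + |y|) := by
        rw [rpow_two, rpow_two, sq_sub_sq, abs_mul, abs_of_nonneg (by positivity : 0 ≤ |x| + |y|),
          mul_comm]
    _ ≤ |x - y| * (|x| + |y|) := by gcongr ?_ * _; exact abs_abs_sub_abs_le_abs_sub x y

end Real

namespace MeasureTheory

variable {X : Type*} [MeasurableSpace X] {μ : Measure X}

theorem MemLp.abs_rpow_div {f : X → ℝ} {p q : ℝ} (hf : MemLp f (ENNReal.ofReal p) μ)
    (hp : 0 < p) (hq : 0 < q) : MemLp (fun x => |f x| ^ (p / q)) (ENNReal.ofReal q) μ := by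
  have h := hf.norm_rpow_div (ENNReal.ofReal (p / q))
  rwa [ENNReal.toReal_ofReal (by positivity), ← ENNReal.ofReal_div_of_pos (by positivity),
    div_div_cancel₀ hp.ne'] at h

theorem integral_mul_le_eLpNorm_two_mul {f g : X → ℝ} (hf : MemLp f 2 μ) (hg : MemLp g 2 μ) :
    ∫ x, f x * g x ∂μ ≤ (eLpNorm f 2 μ).toReal * (eLpNorm g 2 μ).toReal := by
  have h := real_inner_le_norm (hf.toLp f) (hg.toLp g)
  rw [L2.inner_def, Lp.norm_toLp, Lp.norm_toLp] at h
  refine le_of_eq_of_le (integral_congr_ae ?_) h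
  filter_upwards [hf.coeFn_toLp, hg.coeFn_toLp] with x hfx hgx
  simp [hfx, hgx, mul_comm]

theorem eLpNorm_abs (f : X → ℝ) (p : ENNReal) : eLpNorm |f| p μ = eLpNorm f p μ :=
  eLpNorm_norm f

theorem integral_abs_sub_mul_abs_add_abs_le {f g : X → ℝ} (hf : MemLp f 2 μ)
    (hg : MemLp g 2 μ) :
    ∫ x, |f x - g x| * (|f x| + |g x|) ∂μ ≤
      (eLpNorm (fun x => f x - g x) 2 μ).toReal *
        ((eLpNorm f 2 μ).toReal + (eLpNorm g 2 μ).toReal) := by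
  have htri : eLpNorm (|f| + |g|) 2 μ ≤ eLpNorm f 2 μ + eLpNorm g 2 μ := by
    simpa only [eLpNorm_abs] using eLpNorm_add_le hf.abs.1 hg.abs.1 one_le_two
  calc _ ≤ (eLpNorm |f - g| 2 μ).toReal * (eLpNorm (|f| + |g|) 2 μ).toReal :=
        integral_mul_le_eLpNorm_two_mul (hf.sub hg).abs (hf.abs.add hg.abs)
    _ ≤ (eLpNorm (f - g) 2 μ).toReal * (eLpNorm f 2 μ + eLpNorm g 2 μ).toReal := by
      rw [eLpNorm_abs]
      gcongr
      exact ENNReal.add_ne_top.2 ⟨hf.eLpNorm_ne_top, hg.eLpNorm_ne_top⟩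
    _ = _ := by rw [ENNReal.toReal_add hf.eLpNorm_ne_top hg.eLpNorm_ne_top]; rfl

end MeasureTheory

theorem rpow_two_div_alpha_estimate_general
    (Ω : Set (EuclideanSpace ℝ (Fin 2)))
    (α : ℝ) (hα1 : 1 < α)
    (w₁ w₂ : EuclideanSpace ℝ (Fin 2) → ℝ)
    (h₁ : MemLp w₁ 2 (volume.restrict Ω)) (h₂ : MemLp w₂ 2 (volume.restrict Ω)) :
    MemLp (fun x => |w₁ x| ^ (2 / α)) (ENNReal.ofReal α) (volume.restrict Ω) ∧
    MemLp (fun x => |w₂ x| ^ (2 / α)) (ENNReal.ofReal α) (volume.restrict Ω) ∧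
    ∫ x in Ω, |(|w₁ x| ^ (2 / α) - |w₂ x| ^ (2 / α))| ^ α ≤
      (eLpNorm (fun x => w₁ x - w₂ x) 2 (volume.restrict Ω)).toReal *
        ((eLpNorm w₁ 2 (volume.restrict Ω)).toReal +
          (eLpNorm w₂ 2 (volume.restrict Ω)).toReal) := by
  have hmem {w : EuclideanSpace ℝ (Fin 2) → ℝ} (hw : MemLp w 2 (volume.restrict Ω)) :
      MemLp (fun x => |w x| ^ (2 / α)) (ENNReal.ofReal α) (volume.restrict Ω) :=
    MemLp.abs_rpow_div (by rwa [ENNReal.ofReal_ofNat]) two_pos (zero_lt_one.trans hα1)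
  have hint : Integrable (|w₁ - w₂| * (|w₁| + |w₂|)) (volume.restrict Ω) :=
    (h₁.sub h₂).abs.integrable_mul (h₁.abs.add h₂.abs)
  refine ⟨hmem h₁, hmem h₂, ?_⟩
  calc ∫ x in Ω, |(|w₁ x| ^ (2 / α) - |w₂ x| ^ (2 / α))| ^ α
      ≤ ∫ x in Ω, |w₁ x - w₂ x| * (|w₁ x| + |w₂ x|) :=
        integral_mono_of_nonneg (ae_of_all _ fun _ => by positivity) hint
          (ae_of_all _ fun _ => Real.abs_abs_rpow_two_div_sub_rpow_le_mul hα1.le)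
    _ ≤ _ := integral_abs_sub_mul_abs_add_abs_le h₁ h₂

/-- Key quantitative estimate from the proofs of Lemmas 3.3 and 3.5: for a measurable
set `Ω ⊆ ℝ²`, `1 < α < 2` and `w₁, w₂ ∈ L²(Ω)`, the functions `|wᵢ|^{2/α}` belong to
`L^α(Ω)` and
`∫_Ω | |w₁|^{2/α} − |w₂|^{2/α} |^α dx ≤ ‖w₁ − w₂‖_{L²} (‖w₁‖_{L²} + ‖w₂‖_{L²})`. -/
theorem rpow_two_div_alpha_estimate
    (Ω : Set (EuclideanSpace ℝ (Fin 2))) (hΩ : MeasurableSet Ω)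
    (α : ℝ) (hα1 : 1 < α) (hα2 : α < 2)
    (w₁ w₂ : EuclideanSpace ℝ (Fin 2) → ℝ)
    (h₁ : MemLp w₁ 2 (volume.restrict Ω)) (h₂ : MemLp w₂ 2 (volume.restrict Ω)) :
    MemLp (fun x => |w₁ x| ^ (2 / α)) (ENNReal.ofReal α) (volume.restrict Ω) ∧
    MemLp (fun x => |w₂ x| ^ (2 / α)) (ENNReal.ofReal α) (volume.restrict Ω) ∧
    ∫ x in Ω, |(|w₁ x| ^ (2 / α) - |w₂ x| ^ (2 / α))| ^ α ≤
      (eLpNorm (fun x => w₁ x - w₂ x) 2 (volume.restrict Ω)).toReal *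
        ((eLpNorm w₁ 2 (volume.restrict Ω)).toReal +
          (eLpNorm w₂ 2 (volume.restrict Ω)).toReal) :=
  rpow_two_div_alpha_estimate_general Ω α hα1 w₁ w₂ h₁ h₂
end

section
/- Let 1 < r < ∞. There exists a constant C = C(r) > 0 such that for all real numbers ξ and η, (|ξ|^{r−2}ξ − |η|^{r−2}η) · (ξ − η) ≥ C · ( |ξ|^{(r−2)/2}ξ − |η|^{(r−2)/2}η )². -/
/-!
Since `|t| ^ s * t` is a primitive of `(s + 1) * |t| ^ s` for `s > -1`, both sides are integrals
over `[η, ξ]`: the difference on the left is `(r / 2) ∫ |t| ^ ((r - 2) / 2)`, the first factor on the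
right is `(r - 1) ∫ |t| ^ (r - 2)`, and `|t| ^ (r - 2)` is the square of `|t| ^ ((r - 2) / 2)`.
Cauchy–Schwarz on `[η, ξ]` then gives the inequality with `C = 4 (r - 1) / r ^ 2`.
-/

open MeasureTheory intervalIntegral Set

section AbsRpow

variable {p : ℝ}

lemma intervalIntegrable_abs_rpow (hp : -1 < p) (a b : ℝ) :
    IntervalIntegrable (fun t : ℝ => |t| ^ p) volume a b := by
  have from_zero_of_nonneg {c : ℝ} (hc : 0 ≤ c) :
      IntervalIntegrable (fun t : ℝ => |t| ^ p) volume 0 c := by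
    refine (intervalIntegrable_rpow' hp).congr ?_
    intro t ht
    rw [uIoc_of_le hc] at ht
    simp [abs_of_pos ht.1]
  have from_zero (c : ℝ) : IntervalIntegrable (fun t : ℝ => |t| ^ p) volume 0 c := by
    rcases le_total 0 c with hc | hc
    · exact from_zero_of_nonneg hc
    · rw [IntervalIntegrable.iff_comp_neg]
      simpa using from_zero_of_nonneg (neg_nonneg.2 hc)
  exact (from_zero a).symm.trans (from_zero b)

lemma integral_zero_abs_rpow_of_nonneg (hp : -1 < p) {c : ℝ} (hc : 0 ≤ c) :
    ∫ t in (0 : ℝ)..c, |t| ^ p = |c| ^ p * c / (p + 1) := by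
  have hp1 : p + 1 ≠ 0 := by linarith
  rw [integral_congr (g := fun t => t ^ p) fun t ht => by
      rw [uIcc_of_le hc] at ht; simp [abs_of_nonneg ht.1],
    integral_rpow (Or.inl hp), Real.zero_rpow hp1, abs_of_nonneg hc]
  rcases hc.eq_or_lt with rfl | hc
  · simp [Real.zero_rpow hp1]
  · rw [Real.rpow_add_one hc.ne', sub_zero]

lemma integral_zero_abs_rpow (hp : -1 < p) (c : ℝ) :
    ∫ t in (0 : ℝ)..c, |t| ^ p = |c| ^ p * c / (p + 1) := by
  rcases le_total 0 c with hc | hc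
  · exact integral_zero_abs_rpow_of_nonneg hp hc
  · have reflect := integral_comp_neg (a := 0) (b := c) fun t : ℝ => |t| ^ p
    simp only [abs_neg, neg_zero] at reflect
    rw [reflect, integral_symm, integral_zero_abs_rpow_of_nonneg hp (neg_nonneg.2 hc), abs_neg]
    ring

lemma integral_abs_rpow (hp : -1 < p) (a b : ℝ) :
    ∫ t in a..b, |t| ^ p = (|b| ^ p * b - |a| ^ p * a) / (p + 1) := by
  rw [← integral_add_adjacent_intervals (intervalIntegrable_abs_rpow hp a 0)
      (intervalIntegrable_abs_rpow hp 0 b), integral_symm, integral_zero_abs_rpow hp,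
    integral_zero_abs_rpow hp]
  ring

end AbsRpow

lemma sq_intervalIntegral_le {a b : ℝ} (hab : a ≤ b) {f : ℝ → ℝ}
    (hf : IntervalIntegrable f volume a b)
    (hf_sq : IntervalIntegrable (fun t => f t ^ 2) volume a b) :
    (∫ t in a..b, f t) ^ 2 ≤ (b - a) * ∫ t in a..b, f t ^ 2 := by
  rcases hab.eq_or_lt with rfl | hab
  · simp
  set I := ∫ t in a..b, f t
  -- Cauchy–Schwarz as the nonnegativity of the variance of `f` about its mean `c`.
  set c := I / (b - a)
  have hc : (b - a) * c = I := mul_div_cancel₀ I (sub_pos.2 hab).ne'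
  have variance_nonneg : 0 ≤ ∫ t in a..b, (f t - c) ^ 2 :=
    integral_nonneg hab.le fun t _ => sq_nonneg _
  have expand :
      ∫ t in a..b, (f t - c) ^ 2 = (∫ t in a..b, f t ^ 2) - 2 * c * I + (b - a) * c ^ 2 := by
    have pointwise (t : ℝ) : (f t - c) ^ 2 = f t ^ 2 - 2 * c * f t + c ^ 2 := by ring
    simp_rw [pointwise]
    rw [integral_add (hf_sq.sub (hf.const_mul _)) intervalIntegrable_const,
      integral_sub hf_sq (hf.const_mul _), intervalIntegral.integral_const_mul,
      intervalIntegral.integral_const, smul_eq_mul]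
  nlinarith

lemma abs_rpow_div_two_sq (q t : ℝ) : (|t| ^ (q / 2)) ^ 2 = |t| ^ q := by
  rw [← Real.rpow_mul_natCast (abs_nonneg t)]
  norm_num

lemma simon_inequality {r : ℝ} (hr : 1 < r) (ξ η : ℝ) :
    4 * (r - 1) / r ^ 2 * (|ξ| ^ ((r - 2) / 2) * ξ - |η| ^ ((r - 2) / 2) * η) ^ 2 ≤
      (|ξ| ^ (r - 2) * ξ - |η| ^ (r - 2) * η) * (ξ - η) := by
  wlog hle : η ≤ ξ generalizing ξ η
  · convert this η ξ (le_of_not_ge hle) using 1 <;> ring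
  have hp₁ : -1 < (r - 2) / 2 := by linarith
  have hp₂ : -1 < r - 2 := by linarith
  have cauchy_schwarz := sq_intervalIntegral_le hle (intervalIntegrable_abs_rpow hp₁ η ξ)
    (by simpa only [abs_rpow_div_two_sq] using intervalIntegrable_abs_rpow hp₂ η ξ)
  simp only [abs_rpow_div_two_sq, integral_abs_rpow hp₁, integral_abs_rpow hp₂] at cauchy_schwarz
  rw [show (r - 2) / 2 + 1 = r / 2 by ring, show r - 2 + 1 = r - 1 by ring] at cauchy_schwarz
  have hr₀ : r ≠ 0 := by positivity
  have hr₁ : r - 1 ≠ 0 := by linarith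
  calc 4 * (r - 1) / r ^ 2 * (|ξ| ^ ((r - 2) / 2) * ξ - |η| ^ ((r - 2) / 2) * η) ^ 2
      = (r - 1) * ((|ξ| ^ ((r - 2) / 2) * ξ - |η| ^ ((r - 2) / 2) * η) / (r / 2)) ^ 2 := by
        field_simp
        ring
    _ ≤ (r - 1) * ((ξ - η) * ((|ξ| ^ (r - 2) * ξ - |η| ^ (r - 2) * η) / (r - 1))) := by
        gcongr
    _ = (|ξ| ^ (r - 2) * ξ - |η| ^ (r - 2) * η) * (ξ - η) := by
        field_simp

/-- **Lemma 3.7, second inequality (Lemma 1.1 of Raviart, due to Simon).** For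
`1 < r < ∞` there is a constant `C = C(r) > 0` such that for all real `ξ, η`,
`(|ξ|^{r−2}ξ − |η|^{r−2}η)(ξ − η) ≥ C(|ξ|^{(r−2)/2}ξ − |η|^{(r−2)/2}η)²`. -/
theorem raviart_second_inequality (r : ℝ) (hr : 1 < r) :
    ∃ C > (0 : ℝ), ∀ ξ η : ℝ,
      C * (|ξ| ^ ((r - 2) / 2) * ξ - |η| ^ ((r - 2) / 2) * η) ^ 2 ≤
        (|ξ| ^ (r - 2) * ξ - |η| ^ (r - 2) * η) * (ξ - η) :=
  ⟨4 * (r - 1) / r ^ 2, by have := sub_pos.2 hr; positivity,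
    simon_inequality hr⟩
end
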